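/- arXiv:1108.5119 — 2 statements merged into one kernel-verified Lean document; each statement's English description precedes it below -/
import Mathlib

section
/- Kernel estimate for separated cubes: Let K : ℝ^d × ℝ^d → ℝ satisfy |K(x,y) − K(x,y')| ≤ C·ψ(|y−y'|/|x−y|)/|x−y|^d whenever |x−y| > 2|y−y'| (with |·| the ℓ^∞ norm and ψ increasing). Let I and J be cubes with ℓ(I) ≤ ℓ(J) and dist(I,J) ≥ ℓ(I), let h_I be supported on I with ∫h_I = 0 and ‖h_I‖_1 ≤ |I|^{1/2}, and let h_J be supported on J with ‖h_J‖_1 ≤ |J|^{1/2}. If moreover dist(I,J) > 2·ℓ(I), then |∬ h_J(x)K(x,y)h_I(y) dy dx| ≤ C·dist(I,J)^{-d}·ψ(ℓ(I)/dist(I,J))·|I|^{1/2}·|J|^{1/2}. -/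
open MeasureTheory

/-! Since `h_I` has mean zero, `K x cI` may be subtracted from `K x y` under the inner integral,
where `cI` is a corner of `I`. For `x ∈ J`, `y ∈ I` the regularity of `K` bounds
`|K x y - K x cI|` by `C ψ(ℓ(I)/D) / D^d`, because `|y - cI| ≤ ℓ(I) < D/2 ≤ |x - y|/2`;
the two `L¹` bounds then finish the estimate. -/

theorem dist_le_of_forall_mem_Icc_add {ι : Type*} [Fintype ι] {y c : ι → ℝ} {r : ℝ}
    (hr : 0 ≤ r) (hy : ∀ i, y i ∈ Set.Icc (c i) (c i + r)) : dist y c ≤ r := by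
  refine (dist_pi_le_iff hr).2 fun i => ?_
  rw [Real.dist_eq, abs_le]
  constructor <;> linarith [(hy i).1, (hy i).2]

theorem sInf_image2_dist_le {α : Type*} [PseudoMetricSpace α] {s t : Set α} {a b : α}
    (ha : a ∈ s) (hb : b ∈ t) : sInf (Set.image2 dist s t) ≤ dist a b :=
  csInf_le ⟨0, by rintro _ ⟨_, _, _, _, rfl⟩; exact dist_nonneg⟩ (Set.mem_image2_of_mem ha hb)

section Integral

variable {α : Type*} [MeasurableSpace α] {μ : Measure α}

theorem abs_integral_mul_le_of_abs_le_on_support {g F : α → ℝ} {s : Set α} {B : ℝ}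
    (hg : Integrable g μ) (hgs : ∀ x ∉ s, g x = 0) (hF : ∀ x ∈ s, |F x| ≤ B) :
    |∫ x, g x * F x ∂μ| ≤ B * ∫ x, |g x| ∂μ := by
  have hbound : ∀ x, ‖g x * F x‖ ≤ B * |g x| := by
    intro x
    by_cases hx : x ∈ s
    · rw [Real.norm_eq_abs, abs_mul, mul_comm B]
      exact mul_le_mul_of_nonneg_left (hF x hx) (abs_nonneg _)
    · simp [hgs x hx]
  rw [← integral_const_mul, ← Real.norm_eq_abs]
  exact norm_integral_le_of_norm_le (hg.abs.const_mul B) (Filter.Eventually.of_forall hbound)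

theorem abs_integral_mul_le_of_integral_eq_zero {f h : α → ℝ} {s : Set α} {c M : ℝ}
    (hM : 0 ≤ M) (hh : Integrable h μ) (hhs : ∀ x ∉ s, h x = 0) (hmean : ∫ x, h x ∂μ = 0)
    (hf : ∀ y ∈ s, |f y - c| ≤ M) :
    |∫ y, f y * h y ∂μ| ≤ M * ∫ y, |h y| ∂μ := by
  by_cases hfh : Integrable (fun y => f y * h y) μ
  · have hshift : ∫ y, f y * h y ∂μ = ∫ y, h y * (f y - c) ∂μ := by
      have hexpand : (fun y => h y * (f y - c)) = fun y => f y * h y - c * h y := by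
        ext y; ring
      rw [hexpand, integral_sub hfh (hh.const_mul c), integral_const_mul, hmean, mul_zero,
        sub_zero]
    rw [hshift]
    exact abs_integral_mul_le_of_abs_le_on_support hh hhs hf
  · rw [integral_undef hfh, abs_zero]
    exact mul_nonneg hM (integral_nonneg fun _ => abs_nonneg _)

end Integral

theorem abs_sub_le_of_regularity {α : Type*} [PseudoMetricSpace α] {d : ℕ} {C : ℝ}
    (hC : 0 ≤ C) {ψ : ℝ → ℝ} (hψmono : MonotoneOn ψ (Set.Icc 0 1))
    (hψ0 : ∀ t ∈ Set.Icc (0:ℝ) 1, 0 ≤ ψ t) {K : α → α → ℝ}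
    (hK : ∀ x y y' : α, dist x y > 2 * dist y y' →
      |K x y - K x y'| ≤ C * ψ (dist y y' / dist x y) / dist x y ^ d)
    {x y c : α} {r D : ℝ} (hyc : dist y c ≤ r) (hrD : 2 * r < D) (hDxy : D ≤ dist x y) :
    |K x y - K x c| ≤ C / D ^ d * ψ (r / D) := by
  have hr : 0 ≤ r := dist_nonneg.trans hyc
  have hD : 0 < D := by linarith
  have hrD1 : r / D ∈ Set.Icc (0:ℝ) 1 := ⟨by positivity, (div_le_one hD).2 (by linarith)⟩
  have hratio : dist y c / dist x y ≤ r / D := div_le_div₀ hr hyc hD hDxy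
  have hψle : ψ (dist y c / dist x y) ≤ ψ (r / D) :=
    hψmono ⟨by positivity, hratio.trans hrD1.2⟩ hrD1 hratio
  calc |K x y - K x c| ≤ C * ψ (dist y c / dist x y) / dist x y ^ d := hK x y c (by linarith)
    _ ≤ C * ψ (r / D) / D ^ d := by
      gcongr
      exact mul_nonneg hC (hψ0 _ hrD1)
    _ = C / D ^ d * ψ (r / D) := by ring

/-- `Fin d → ℝ` carries the sup (`ℓ^∞`) metric, so `D` is `dist(I,J)` in the paper's sense. -/
theorem stmt16_general (d : ℕ) (C : ℝ) (hC : 0 ≤ C)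
    (ψ : ℝ → ℝ) (hψmono : MonotoneOn ψ (Set.Icc 0 1))
    (hψ0 : ∀ t ∈ Set.Icc (0:ℝ) 1, 0 ≤ ψ t)
    (K : (Fin d → ℝ) → (Fin d → ℝ) → ℝ)
    (hK : ∀ x y y' : Fin d → ℝ, dist x y > 2 * dist y y' →
      |K x y - K x y'| ≤ C * ψ (dist y y' / dist x y) / dist x y ^ d)
    (cI : Fin d → ℝ) (rI rJ : ℝ) (hrI : 0 < rI)
    (I J : Set (Fin d → ℝ))
    (hI : I = {x | ∀ i, x i ∈ Set.Ico (cI i) (cI i + rI)})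
    (D : ℝ) (hD : D = sInf (Set.image2 dist I J))
    (hD2 : 2 * rI < D)
    (hI' hJ' : (Fin d → ℝ) → ℝ)
    (hI'int : Integrable hI') (hJ'int : Integrable hJ')
    (hI'supp : ∀ x ∉ I, hI' x = 0) (hJ'supp : ∀ x ∉ J, hJ' x = 0)
    (hI'cancel : ∫ x, hI' x = 0)
    (hI'L1 : ∫ x, |hI' x| ≤ Real.sqrt (rI ^ d))
    (hJ'L1 : ∫ x, |hJ' x| ≤ Real.sqrt (rJ ^ d)) :
    |∫ x, ∫ y, hJ' x * K x y * hI' y| ≤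
      C / D ^ d * ψ (rI / D) * (Real.sqrt (rI ^ d) * Real.sqrt (rJ ^ d)) := by
  set M := C / D ^ d * ψ (rI / D)
  have hM : 0 ≤ M :=
    mul_nonneg (div_nonneg hC (pow_nonneg (by linarith) d))
      (hψ0 _ ⟨div_nonneg hrI.le (by linarith), (div_le_one (by linarith)).2 (by linarith)⟩)
  have hkernel : ∀ x ∈ J, ∀ y ∈ I, |K x y - K x cI| ≤ M := fun x hx y hy =>
    abs_sub_le_of_regularity hC hψmono hψ0 hK
      (dist_le_of_forall_mem_Icc_add hrI.le fun i => Set.Ico_subset_Icc_self ((hI ▸ hy) i))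
      hD2 (hD ▸ dist_comm x y ▸ sInf_image2_dist_le hy hx)
  have hinner : ∀ x ∈ J, |∫ y, K x y * hI' y| ≤ M * Real.sqrt (rI ^ d) := fun x hx =>
    (abs_integral_mul_le_of_integral_eq_zero hM hI'int hI'supp hI'cancel (hkernel x hx)).trans
      (mul_le_mul_of_nonneg_left hI'L1 hM)
  calc |∫ x, ∫ y, hJ' x * K x y * hI' y| = |∫ x, hJ' x * ∫ y, K x y * hI' y| := by
        simp_rw [mul_assoc, integral_const_mul]
    _ ≤ M * Real.sqrt (rI ^ d) * ∫ x, |hJ' x| :=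
        abs_integral_mul_le_of_abs_le_on_support hJ'int hJ'supp hinner
    _ ≤ M * Real.sqrt (rI ^ d) * Real.sqrt (rJ ^ d) := by gcongr
    _ = M * (Real.sqrt (rI ^ d) * Real.sqrt (rJ ^ d)) := by ring

/-- Kernel estimate for separated cubes.  Here `Fin d → ℝ` carries the sup (`ℓ^∞`) metric,
`I` and `J` are axis-parallel cubes of side lengths `rI ≤ rJ`, `D = dist(I,J)`, and
`hI'`, `hJ'` play the roles of the Haar-type functions `h_I`, `h_J`. -/
theorem stmt16 (d : ℕ) (hd : 1 ≤ d) (C : ℝ) (hC : 0 ≤ C)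
    (ψ : ℝ → ℝ) (hψmono : MonotoneOn ψ (Set.Icc 0 1))
    (hψ0 : ∀ t ∈ Set.Icc (0:ℝ) 1, 0 ≤ ψ t)
    (K : (Fin d → ℝ) → (Fin d → ℝ) → ℝ)
    (hK : ∀ x y y' : Fin d → ℝ, dist x y > 2 * dist y y' →
      |K x y - K x y'| ≤ C * ψ (dist y y' / dist x y) / dist x y ^ d)
    (cI cJ : Fin d → ℝ) (rI rJ : ℝ) (hrI : 0 < rI) (hrIJ : rI ≤ rJ)
    (I J : Set (Fin d → ℝ))
    (hI : I = {x | ∀ i, x i ∈ Set.Ico (cI i) (cI i + rI)})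
    (hJ : J = {x | ∀ i, x i ∈ Set.Ico (cJ i) (cJ i + rJ)})
    (D : ℝ) (hD : D = sInf (Set.image2 dist I J))
    (hD1 : rI ≤ D) (hD2 : 2 * rI < D)
    (hI' hJ' : (Fin d → ℝ) → ℝ)
    (hI'int : Integrable hI') (hJ'int : Integrable hJ')
    (hI'supp : ∀ x ∉ I, hI' x = 0) (hJ'supp : ∀ x ∉ J, hJ' x = 0)
    (hI'cancel : ∫ x, hI' x = 0)
    (hI'L1 : ∫ x, |hI' x| ≤ Real.sqrt (rI ^ d))
    (hJ'L1 : ∫ x, |hJ' x| ≤ Real.sqrt (rJ ^ d)) :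
    |∫ x, ∫ y, hJ' x * K x y * hI' y| ≤
      C / D ^ d * ψ (rI / D) * (Real.sqrt (rI ^ d) * Real.sqrt (rJ ^ d)) :=
  stmt16_general d C hC ψ hψmono hψ0 K hK cI rI rJ hrI I J hI D hD hD2 hI' hJ' hI'int hJ'int hI'supp
    hJ'supp hI'cancel hI'L1 hJ'L1
end

section
/- The kernel K_n(z) = (−1)^n·(|n|/π)·(z̄/z)^n·|z|^{−2} of the n-th power of the Ahlfors–Beurling operator satisfies the size bound |K_n(z)| = (|n|/π)·|z|^{−2} for all z ∈ ℂ \ {0}, and the gradient bound |∇K_n(z)| ≤ C·|n|²·|z|^{−3} for a universal constant C; consequently for each α ∈ (0,1], |K_n(z) − K_n(z')| ≤ C_α·|n|^{1+α}·(|z−z'|/|z|)^α·|z|^{−2} whenever |z| > 2|z−z'|. -/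
/-!
Away from the origin `K_n(z) = c_n z̄^(n-1) z^(-n-1)` with `|c_n| = |n|/π`, so its real derivative
has norm at most `(|n|/π)(|n-1| + |n+1|)|z|^(-3) ≤ n²|z|^(-3)`. If `|z| > 2|z - z'|`, the segment
from `z` to `z'` stays in `|w| ≥ |z|/2`, so with `t = |z - z'|/|z|` the mean value theorem gives
`|K_n(z) - K_n(z')| ≤ 8n²t|z|^(-2)`, while the size bound gives `|K_n(z) - K_n(z')| ≤ 2|n||z|^(-2)`.
Interpolating, `min(n²t, |n|) ≤ (n²t)^α |n|^(1-α) = |n|^(1+α) t^α`.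
-/

open scoped Real ComplexConjugate
open Complex Metric Filter Topology

lemma le_rpow_mul_rpow_of_le_of_le {u a b α : ℝ} (ha : 0 ≤ a) (hb : 0 ≤ b) (hα0 : 0 ≤ α)
    (hα1 : α ≤ 1) (hua : u ≤ a) (hub : u ≤ b) : u ≤ a ^ α * b ^ (1 - α) := by
  have hm : 0 ≤ min a b := le_min ha hb
  calc u ≤ min a b := le_min hua hub
    _ = min a b ^ α * min a b ^ (1 - α) := by
      rw [← Real.rpow_add' hm (by norm_num), add_sub_cancel, Real.rpow_one]
    _ ≤ a ^ α * b ^ (1 - α) := by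
      gcongr
      exacts [min_le_left a b, min_le_right a b]

lemma half_norm_le_norm_of_mem_closedBall {E : Type*} [SeminormedAddCommGroup E] {z w : E} {d : ℝ}
    (hd : 2 * d ≤ ‖z‖) (hw : w ∈ closedBall z d) : ‖z‖ / 2 ≤ ‖w‖ := by
  rw [mem_closedBall', dist_eq_norm] at hw
  linarith [norm_sub_norm_le z w]

lemma norm_fderiv_conj_comp {E : Type*} [NormedAddCommGroup E] [NormedSpace ℝ E] (f : E → ℂ)
    (x : E) : ‖fderiv ℝ (fun y => conj (f y)) x‖ = ‖fderiv ℝ f x‖ :=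
  (congrArg norm (conjLIE.comp_fderiv (f := f) (x := x))).trans
    conjLIE.toLinearIsometry.norm_toContinuousLinearMap_comp

lemma norm_fderiv_zpow (q : ℤ) {z : ℂ} (hz : z ≠ 0) :
    ‖fderiv ℝ (fun w : ℂ => w ^ q) z‖ = |(q : ℝ)| * ‖z‖ ^ (q - 1) := by
  rw [(differentiableAt_zpow.2 (.inl hz)).fderiv_restrictScalars ℝ,
    ContinuousLinearMap.norm_restrictScalars, ← norm_deriv_eq_norm_fderiv, deriv_zpow,
    norm_mul, norm_zpow, Complex.norm_intCast]

lemma differentiableAt_conj_zpow_mul_zpow (p q : ℤ) {z : ℂ} (hz : z ≠ 0) :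
    DifferentiableAt ℝ (fun w : ℂ => conj w ^ p * w ^ q) z := by
  have hzpow (k : ℤ) : DifferentiableAt ℝ (fun w : ℂ => w ^ k) z :=
    (differentiableAt_zpow.2 (.inl hz)).restrictScalars ℝ
  simp_rw [← map_zpow₀]
  exact (conjCLE.differentiableAt.comp z (hzpow p)).mul (hzpow q)

lemma norm_fderiv_conj_zpow_mul_zpow_le (p q : ℤ) {z : ℂ} (hz : z ≠ 0) :
    ‖fderiv ℝ (fun w : ℂ => conj w ^ p * w ^ q) z‖ ≤
      (|(p : ℝ)| + |(q : ℝ)|) * ‖z‖ ^ (p + q - 1) := by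
  have hzpow (k : ℤ) : DifferentiableAt ℝ (fun w : ℂ => w ^ k) z :=
    (differentiableAt_zpow.2 (.inl hz)).restrictScalars ℝ
  have hnz : ‖z‖ ≠ 0 := norm_ne_zero_iff.2 hz
  have hconj : DifferentiableAt ℝ (fun w : ℂ => conj (w ^ p)) z :=
    conjCLE.differentiableAt.comp z (hzpow p)
  simp_rw [← map_zpow₀]
  rw [fderiv_fun_mul hconj (hzpow q)]
  calc _ ≤ ‖conj (z ^ p)‖ * ‖fderiv ℝ (fun w : ℂ => w ^ q) z‖ +
        ‖z ^ q‖ * ‖fderiv ℝ (fun w : ℂ => conj (w ^ p)) z‖ :=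
        (norm_add_le _ _).trans (add_le_add (norm_smul_le _ _) (norm_smul_le _ _))
    _ = (|(p : ℝ)| + |(q : ℝ)|) * ‖z‖ ^ (p + q - 1) := by
      rw [norm_fderiv_conj_comp, norm_fderiv_zpow q hz, norm_fderiv_zpow p hz, RCLike.norm_conj,
        norm_zpow, norm_zpow, mul_left_comm, ← zpow_add₀ hnz, mul_left_comm (‖z‖ ^ q),
        ← zpow_add₀ hnz]
      ring_nf

noncomputable def beurlingKernel (n : ℤ) (z : ℂ) : ℂ :=
  (-1 : ℂ) ^ n * (((n.natAbs : ℝ) / π : ℝ) : ℂ) * (conj z / z) ^ n * ((‖z‖ ^ 2 : ℝ) : ℂ)⁻¹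

noncomputable def beurlingConst (n : ℤ) : ℂ := (-1 : ℂ) ^ n * (((n.natAbs : ℝ) / π : ℝ) : ℂ)

lemma norm_beurlingConst (n : ℤ) : ‖beurlingConst n‖ = n.natAbs / π := by
  rw [beurlingConst, norm_mul, norm_zpow, norm_neg, norm_one, one_zpow, one_mul, norm_real,
    Real.norm_of_nonneg (by positivity)]

lemma norm_beurlingKernel (n : ℤ) (z : ℂ) : ‖beurlingKernel n z‖ = n.natAbs / π / ‖z‖ ^ 2 := by
  rcases eq_or_ne z 0 with rfl | hz
  · simp [beurlingKernel]
  rw [beurlingKernel, ← beurlingConst, norm_mul, norm_mul, norm_beurlingConst, norm_zpow, norm_div,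
    RCLike.norm_conj, div_self (norm_ne_zero_iff.2 hz), one_zpow, norm_inv, norm_real,
    Real.norm_of_nonneg (by positivity), mul_one, ← div_eq_mul_inv]

lemma beurlingKernel_eq_const_mul (n : ℤ) {z : ℂ} (hz : z ≠ 0) :
    beurlingKernel n z = beurlingConst n * (conj z ^ (n - 1) * z ^ (-(n + 1))) := by
  have hconj : conj z ≠ 0 := (map_ne_zero _).2 hz
  have hnormSq : ((‖z‖ ^ 2 : ℝ) : ℂ) = z * conj z := by
    rw [← normSq_eq_norm_sq, mul_conj]
  rw [beurlingKernel, ← beurlingConst, hnormSq, div_zpow, zpow_sub₀ hconj, zpow_neg,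
    zpow_add₀ hz]
  field_simp

lemma beurlingKernel_eventuallyEq (n : ℤ) {z : ℂ} (hz : z ≠ 0) :
    beurlingKernel n =ᶠ[𝓝 z] fun w => beurlingConst n * (conj w ^ (n - 1) * w ^ (-(n + 1))) :=
  (eventually_ne_nhds hz).mono fun _ hw => beurlingKernel_eq_const_mul n hw

lemma differentiableAt_beurlingKernel (n : ℤ) {z : ℂ} (hz : z ≠ 0) :
    DifferentiableAt ℝ (beurlingKernel n) z :=
  ((differentiableAt_conj_zpow_mul_zpow _ _ hz).const_mul _).congr_of_eventuallyEq
    (beurlingKernel_eventuallyEq n hz)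

lemma abs_mul_abs_sub_one_add_abs_add_one_le (n : ℤ) : |n| * (|n - 1| + |n + 1|) ≤ 2 * n ^ 2 := by
  rcases eq_or_ne n 0 with rfl | hn
  · simp
  rw [show |n - 1| + |n + 1| = 2 * |n| by simp only [abs_eq_max_neg]; omega]
  nlinarith [sq_abs n]

lemma norm_fderiv_beurlingKernel_le (n : ℤ) {z : ℂ} (hz : z ≠ 0) :
    ‖fderiv ℝ (beurlingKernel n) z‖ ≤ (n : ℝ) ^ 2 / ‖z‖ ^ 3 := by
  rw [(beurlingKernel_eventuallyEq n hz).fderiv_eq,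
    fderiv_const_mul (differentiableAt_conj_zpow_mul_zpow _ _ hz)]
  have hn : |(n : ℝ)| * (|(n : ℝ) - 1| + |(n : ℝ) + 1|) ≤ 2 * (n : ℝ) ^ 2 := by
    exact_mod_cast abs_mul_abs_sub_one_add_abs_add_one_le n
  have hz3 : ‖z‖ ^ (n - 1 + -(n + 1) - 1) = (‖z‖ ^ 3)⁻¹ := by
    rw [show n - 1 + -(n + 1) - 1 = -3 by ring, zpow_neg, zpow_ofNat]
  calc _ ≤ ‖beurlingConst n‖ * ‖fderiv ℝ (fun w : ℂ => conj w ^ (n - 1) * w ^ (-(n + 1))) z‖ :=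
        norm_smul_le _ _
    _ ≤ n.natAbs / π * ((|((n - 1 : ℤ) : ℝ)| + |((-(n + 1) : ℤ) : ℝ)|) * (‖z‖ ^ 3)⁻¹) := by
        rw [norm_beurlingConst, ← hz3]
        gcongr
        exact norm_fderiv_conj_zpow_mul_zpow_le _ _ hz
    _ = |(n : ℝ)| * (|(n : ℝ) - 1| + |(n : ℝ) + 1|) / π / ‖z‖ ^ 3 := by
        push_cast
        rw [Nat.cast_natAbs, Int.cast_abs, ← abs_neg ((n : ℝ) + 1)]
        ring
    _ ≤ 2 * (n : ℝ) ^ 2 / π / ‖z‖ ^ 3 := by gcongr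
    _ ≤ (n : ℝ) ^ 2 / ‖z‖ ^ 3 := by
        gcongr
        rw [div_le_iff₀ Real.pi_pos]
        nlinarith [Real.pi_gt_three, sq_nonneg (n : ℝ)]

lemma norm_beurlingKernel_sub_le_mul_norm_sub (n : ℤ) {z z' : ℂ} (h : 2 * ‖z - z'‖ < ‖z‖) :
    ‖beurlingKernel n z - beurlingKernel n z'‖ ≤ 8 * (n : ℝ) ^ 2 / ‖z‖ ^ 3 * ‖z - z'‖ := by
  have hr : 0 < ‖z‖ := by linarith [norm_nonneg (z - z')]
  have hball (w : ℂ) (hw : w ∈ closedBall z ‖z - z'‖) : ‖z‖ / 2 ≤ ‖w‖ :=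
    half_norm_le_norm_of_mem_closedBall h.le hw
  have hne (w : ℂ) (hw : w ∈ closedBall z ‖z - z'‖) : w ≠ 0 :=
    norm_pos_iff.1 (by linarith [hball w hw])
  refine (convex_closedBall z _).norm_image_sub_le_of_norm_fderiv_le
    (fun w hw => differentiableAt_beurlingKernel n (hne w hw)) (fun w hw => ?_)
    (by rw [mem_closedBall, dist_eq_norm, norm_sub_rev]) (mem_closedBall_self (norm_nonneg _))
  calc ‖fderiv ℝ (beurlingKernel n) w‖ ≤ (n : ℝ) ^ 2 / ‖w‖ ^ 3 :=
        norm_fderiv_beurlingKernel_le n (hne w hw)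
    _ ≤ (n : ℝ) ^ 2 / (‖z‖ / 2) ^ 3 := by gcongr; exact hball w hw
    _ = 8 * (n : ℝ) ^ 2 / ‖z‖ ^ 3 := by ring

lemma norm_beurlingKernel_sub_le (n : ℤ) {z z' : ℂ} (h : 2 * ‖z - z'‖ < ‖z‖) :
    ‖beurlingKernel n z - beurlingKernel n z'‖ ≤ 2 * n.natAbs / ‖z‖ ^ 2 := by
  have hr : 0 < ‖z‖ := by linarith [norm_nonneg (z - z')]
  have hz' : ‖z‖ / 2 ≤ ‖z'‖ :=
    half_norm_le_norm_of_mem_closedBall h.le (by rw [mem_closedBall, dist_eq_norm, norm_sub_rev])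
  calc _ ≤ ‖beurlingKernel n z‖ + ‖beurlingKernel n z'‖ := norm_sub_le _ _
    _ ≤ n.natAbs / π / ‖z‖ ^ 2 + n.natAbs / π / (‖z‖ / 2) ^ 2 := by
        rw [norm_beurlingKernel, norm_beurlingKernel]
        gcongr
    _ = 5 / π * n.natAbs / ‖z‖ ^ 2 := by ring
    _ ≤ 2 * n.natAbs / ‖z‖ ^ 2 := by
        gcongr
        rw [div_le_iff₀ Real.pi_pos]
        linarith [Real.pi_gt_three]

lemma norm_beurlingKernel_sub_le_rpow (n : ℤ) {α : ℝ} (hα0 : 0 ≤ α) (hα1 : α ≤ 1) {z z' : ℂ}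
    (h : 2 * ‖z - z'‖ < ‖z‖) :
    ‖beurlingKernel n z - beurlingKernel n z'‖ ≤
      8 * (n.natAbs : ℝ) ^ (1 + α) * (‖z - z'‖ / ‖z‖) ^ α / ‖z‖ ^ 2 := by
  set N : ℝ := (n.natAbs : ℝ)
  set t := ‖z - z'‖ / ‖z‖ with ht
  have hr : 0 < ‖z‖ := by linarith [norm_nonneg (z - z')]
  have hN : (n : ℝ) ^ 2 = N ^ 2 := by simp only [N, Nat.cast_natAbs, Int.cast_abs, sq_abs]
  have hlip : ‖beurlingKernel n z - beurlingKernel n z'‖ * ‖z‖ ^ 2 / 8 ≤ N ^ 2 * t := by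
    calc _ ≤ 8 * (n : ℝ) ^ 2 / ‖z‖ ^ 3 * ‖z - z'‖ * ‖z‖ ^ 2 / 8 := by
          gcongr; exact norm_beurlingKernel_sub_le_mul_norm_sub n h
      _ = N ^ 2 * t := by rw [hN, ht]; field_simp
  have hsize : ‖beurlingKernel n z - beurlingKernel n z'‖ * ‖z‖ ^ 2 / 8 ≤ N := by
    calc _ ≤ 2 * N / ‖z‖ ^ 2 * ‖z‖ ^ 2 / 8 := by
          gcongr; exact norm_beurlingKernel_sub_le n h
      _ ≤ N := by field_simp; linarith [(Nat.cast_nonneg _ : (0 : ℝ) ≤ N)]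
  have hinterp := le_rpow_mul_rpow_of_le_of_le (by positivity) (by positivity) hα0 hα1 hlip hsize
  have hpow : (N ^ 2 * t) ^ α * N ^ (1 - α) = N ^ (1 + α) * t ^ α := by
    rw [Real.mul_rpow (by positivity) (by positivity), ← Real.rpow_natCast_mul (by positivity),
      mul_right_comm, ← Real.rpow_add' (by positivity) (by push_cast; linarith)]
    ring_nf
  rw [hpow] at hinterp
  rw [le_div_iff₀ (by positivity)]
  linarith

theorem stmt18 (K : ℤ → ℂ → ℂ)
    (hK : ∀ (n : ℤ) (z : ℂ),
      K n z = (-1 : ℂ) ^ n * (((n.natAbs : ℝ) / π : ℝ) : ℂ) *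
        ((starRingEnd ℂ) z / z) ^ n * (((‖z‖) ^ 2 : ℝ) : ℂ)⁻¹) :
    (∀ (n : ℤ), n ≠ 0 → ∀ z : ℂ, z ≠ 0 →
      ‖K n z‖ = ((n.natAbs : ℝ) / π) / ‖z‖ ^ 2) ∧
    (∃ C : ℝ, 0 < C ∧ ∀ (n : ℤ), n ≠ 0 → ∀ z : ℂ, z ≠ 0 →
      ‖fderiv ℝ (K n) z‖ ≤ C * (n : ℝ) ^ 2 / ‖z‖ ^ 3) ∧
    (∀ α ∈ Set.Ioc (0:ℝ) 1, ∃ Cα : ℝ, 0 < Cα ∧ ∀ (n : ℤ), n ≠ 0 → ∀ z z' : ℂ,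
      ‖z‖ > 2 * ‖z - z'‖ →
      ‖K n z - K n z'‖ ≤
        Cα * (n.natAbs : ℝ) ^ (1 + α) * (‖z - z'‖ / ‖z‖) ^ α /
          ‖z‖ ^ 2) := by
  obtain rfl : K = beurlingKernel := funext₂ hK
  refine ⟨fun n _ z _ => norm_beurlingKernel n z, ⟨1, one_pos, fun n _ z hz => ?_⟩,
    fun α hα => ⟨8, by norm_num, fun n _ z z' h =>
      norm_beurlingKernel_sub_le_rpow n hα.1.le hα.2 h⟩⟩
  rw [one_mul]
  exact norm_fderiv_beurlingKernel_le n hz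
end
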